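/- arXiv:1405.0424 — 2 statements merged into one kernel-verified Lean document; each statement's English description precedes it below -/
import Mathlib

section
/- Let T be a universal co-Büchi tree automaton over Σ with n states and λ a strategy represented by a Moore machine M_λ with m states, generating the complete Σ-labelled D-tree T_λ. Then T_λ ∈ L_uc(T) if and only if T_λ ∈ L_{uc,2nm}(T). -/
open Classical

noncomputable section

/-! ## Environment models (Section 2 of the paper) -/

/-- An environment model `M_E = (P, Σ1, Σ2, S_e, S_0, Δ_e, τ_e)` together with the
set `P_v` of visible propositions (the invisible ones being its complement). -/
structure EnvModel (P σ1 σ2 S : Type) where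
  Pv : Set P
  S0 : Set S
  lab : S → Set P
  trans : S → σ1 → σ2 → S → Prop

namespace EnvModel

variable {P σ1 σ2 S 𝕂 : Type}

/-- The model is deadlock-free. -/
def DeadlockFree (M : EnvModel P σ1 σ2 S) : Prop :=
  ∀ s : S, ∃ a1 a2 s', M.trans s a1 a2 s'

/-- The model is complete for all actions of the system. -/
def SysComplete (M : EnvModel P σ1 σ2 S) : Prop :=
  ∀ (s : S) (a1 : σ1), ∃ a2 s', M.trans s a1 a2 s'

/-- Visible part of the label of a state. -/
def vlab (M : EnvModel P σ1 σ2 S) (s : S) : Set P := M.lab s ∩ M.Pv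

/-- The observation (indistinguishability class) of a state. -/
def obsOf (M : EnvModel P σ1 σ2 S) (s : S) : Set S := {s' | M.vlab s' = M.vlab s}

/-- The set `O` of observations, as a type. -/
def Obs (M : EnvModel P σ1 σ2 S) : Type := {o : Set S // ∃ s, o = M.obsOf s}

/-- The observation of a state, as an element of `Obs`. -/
def obs (M : EnvModel P σ1 σ2 S) (s : S) : M.Obs := ⟨M.obsOf s, s, rfl⟩

/-- The executions of the environment model. -/
def exec (M : EnvModel P σ1 σ2 S) : Set (ℕ → S) :=
  {ρ | ρ 0 ∈ M.S0 ∧ ∀ i, ∃ a1 a2, M.trans (ρ i) a1 a2 (ρ (i + 1))}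

/-- Indistinguishability of executions up to position `i` (`ρ ∼_i ρ'`). -/
def simUpTo (M : EnvModel P σ1 σ2 S) (i : ℕ) (ρ ρ' : ℕ → S) : Prop :=
  ∀ j ≤ i, M.vlab (ρ j) = M.vlab (ρ' j)

end EnvModel

/-! ## KLTL syntax and semantics -/

/-- KLTL formulas over atomic propositions `P` (with the derived operators
`∧` and `□` taken as primitive, as used in the grammar of KLTL⁺). -/
inductive KLTL (P : Type) : Type
  | atom : P → KLTL P
  | not : KLTL P → KLTL P
  | and : KLTL P → KLTL P → KLTL P
  | or : KLTL P → KLTL P → KLTL P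
  | next : KLTL P → KLTL P
  | always : KLTL P → KLTL P
  | untl : KLTL P → KLTL P → KLTL P
  | know : KLTL P → KLTL P

namespace KLTL

variable {P P' A : Type}

/-- Generic KLTL semantics: sequences over `A`, labelled by `lab`, with
indistinguishability-up-to-`i` relations `sim i`.  `R` is the ambient set of
executions used to interpret the knowledge operator. -/
def sat (lab : A → Set P) (sim : ℕ → (ℕ → A) → (ℕ → A) → Prop)
    (R : Set (ℕ → A)) : KLTL P → (ℕ → A) → ℕ → Prop
  | atom p, ρ, i => p ∈ lab (ρ i)
  | not φ, ρ, i => ¬ sat lab sim R φ ρ i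
  | and φ ψ, ρ, i => sat lab sim R φ ρ i ∧ sat lab sim R ψ ρ i
  | or φ ψ, ρ, i => sat lab sim R φ ρ i ∨ sat lab sim R ψ ρ i
  | next φ, ρ, i => sat lab sim R φ ρ (i + 1)
  | always φ, ρ, i => ∀ j, i ≤ j → sat lab sim R φ ρ j
  | untl φ ψ, ρ, i =>
      ∃ j, i ≤ j ∧ sat lab sim R ψ ρ j ∧ ∀ k, i ≤ k → k < j → sat lab sim R φ ρ k
  | know φ, ρ, i => ∀ ρ' ∈ R, sim i ρ ρ' → sat lab sim R φ ρ' i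

/-- The positive fragment KLTL⁺: `φ ::= p | ¬p | φ∧φ | φ∨φ | ○φ | □φ | Kφ | φ U φ`. -/
inductive IsPositive : KLTL P → Prop
  | atom (p : P) : IsPositive (atom p)
  | natom (p : P) : IsPositive (not (atom p))
  | and {φ ψ} : IsPositive φ → IsPositive ψ → IsPositive (and φ ψ)
  | or {φ ψ} : IsPositive φ → IsPositive ψ → IsPositive (or φ ψ)
  | next {φ} : IsPositive φ → IsPositive (next φ)
  | always {φ} : IsPositive φ → IsPositive (always φ)
  | untl {φ ψ} : IsPositive φ → IsPositive ψ → IsPositive (untl φ ψ)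
  | know {φ} : IsPositive φ → IsPositive (know φ)

/-- LTL formulas are the KLTL formulas without the knowledge operator. -/
inductive NoKnow : KLTL P → Prop
  | atom (p : P) : NoKnow (atom p)
  | not {φ} : NoKnow φ → NoKnow (not φ)
  | and {φ ψ} : NoKnow φ → NoKnow ψ → NoKnow (and φ ψ)
  | or {φ ψ} : NoKnow φ → NoKnow ψ → NoKnow (or φ ψ)
  | next {φ} : NoKnow φ → NoKnow (next φ)
  | always {φ} : NoKnow φ → NoKnow (always φ)
  | untl {φ ψ} : NoKnow φ → NoKnow ψ → NoKnow (untl φ ψ)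

/-- Subformula relation. -/
inductive Subf : KLTL P → KLTL P → Prop
  | refl (φ) : Subf φ φ
  | not {ψ φ} : Subf ψ φ → Subf ψ (not φ)
  | andL {ψ φ1 φ2} : Subf ψ φ1 → Subf ψ (and φ1 φ2)
  | andR {ψ φ1 φ2} : Subf ψ φ2 → Subf ψ (and φ1 φ2)
  | orL {ψ φ1 φ2} : Subf ψ φ1 → Subf ψ (or φ1 φ2)
  | orR {ψ φ1 φ2} : Subf ψ φ2 → Subf ψ (or φ1 φ2)
  | next {ψ φ} : Subf ψ φ → Subf ψ (next φ)
  | always {ψ φ} : Subf ψ φ → Subf ψ (always φ)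
  | untlL {ψ φ1 φ2} : Subf ψ φ1 → Subf ψ (untl φ1 φ2)
  | untlR {ψ φ1 φ2} : Subf ψ φ2 → Subf ψ (untl φ1 φ2)
  | know {ψ φ} : Subf ψ φ → Subf ψ (know φ)

/-- Size of a formula. -/
def size : KLTL P → ℕ
  | atom _ => 1
  | not φ => φ.size + 1
  | and φ ψ => φ.size + ψ.size + 1
  | or φ ψ => φ.size + ψ.size + 1
  | next φ => φ.size + 1
  | always φ => φ.size + 1
  | untl φ ψ => φ.size + ψ.size + 1
  | know φ => φ.size + 1

/-- Renaming of atomic propositions. -/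
def map (f : P → P') : KLTL P → KLTL P'
  | atom p => atom (f p)
  | not φ => not (φ.map f)
  | and φ ψ => and (φ.map f) (ψ.map f)
  | or φ ψ => or (φ.map f) (ψ.map f)
  | next φ => next (φ.map f)
  | always φ => always (φ.map f)
  | untl φ ψ => untl (φ.map f) (ψ.map f)
  | know φ => know (φ.map f)

/-- LTL satisfaction of a (K-free) formula on an infinite word over `2^P`
(the knowledge operator, which does not occur in LTL formulas, is interpreted
trivially over the singleton set of executions `{w}`). -/
def satW (φ : KLTL P) (w : ℕ → Set P) (i : ℕ) : Prop :=
  sat (fun x : Set P => x) (fun _ _ _ => True) {w} φ w i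

end KLTL

/-! ## Automata on infinite words and trees -/

/-- Universal co-Büchi word automaton. -/
structure UCW (Al Q : Type) where
  init : Set Q
  final : Set Q
  delta : Q → Al → Set Q

namespace UCW

variable {Al Q : Type}

def Complete (A : UCW Al Q) : Prop := ∀ q σ, (A.delta q σ).Nonempty

/-- Language with the universal co-Büchi condition, starting from the states `Q0`. -/
def LucFrom (A : UCW Al Q) (Q0 : Set Q) : Set (ℕ → Al) :=
  {w | ∀ q : ℕ → Q, q 0 ∈ Q0 → (∀ i, q (i + 1) ∈ A.delta (q i) (w i)) →
    {i | q i ∈ A.final}.Finite}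

/-- Language with the universal co-Büchi acceptance condition. -/
def Luc (A : UCW Al Q) : Set (ℕ → Al) := A.LucFrom A.init

end UCW

/-- The prefix of length `i` of an infinite sequence of directions. -/
def prefixOf {D : Type} (ds : ℕ → D) (i : ℕ) : List D :=
  List.ofFn (fun j : Fin i => ds j)

/-- Universal co-Büchi tree automaton, running on complete `Al`-labelled `D`-trees
(identified with functions `List D → Al`). -/
structure UCT (Al Q D : Type) where
  init : Set Q
  final : Set Q
  delta : Q → Al → D → Set Q

namespace UCT

variable {Al Q D : Type}

/-- Language with the universal co-Büchi condition: every branch of the (unique)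
run visits final states finitely often. -/
def Luc (A : UCT Al Q D) : Set (List D → Al) :=
  {t | ∀ (q : ℕ → Q) (ds : ℕ → D), q 0 ∈ A.init →
    (∀ i, q (i + 1) ∈ A.delta (q i) (t (prefixOf ds i)) (ds i)) →
    {i | q i ∈ A.final}.Finite}

/-- Language with the universal `B`-co-Büchi condition: every branch of the run
visits final states at most `B` times. -/
def LucB (A : UCT Al Q D) (B : ℕ) : Set (List D → Al) :=
  {t | ∀ (q : ℕ → Q) (ds : ℕ → D), q 0 ∈ A.init →
    (∀ i, q (i + 1) ∈ A.delta (q i) (t (prefixOf ds i)) (ds i)) →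
    {i | q i ∈ A.final}.Finite ∧ {i | q i ∈ A.final}.ncard ≤ B}

def Deterministic (A : UCT Al Q D) : Prop :=
  (∃ q0, A.init = {q0}) ∧ ∀ q σ d, (A.delta q σ d).Subsingleton

def Complete (A : UCT Al Q D) : Prop :=
  A.init.Nonempty ∧ ∀ q σ d, (A.delta q σ d).Nonempty

/-- `RunReach A t os q` holds iff some finite branch of the run of `A` on the
tree `t`, following the sequence of directions `os`, ends in state `q`. -/
inductive RunReach (A : UCT Al Q D) (t : List D → Al) : List D → Q → Prop
  | base {q} : q ∈ A.init → RunReach A t [] q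
  | step {os q q' o} : RunReach A t os q → q' ∈ A.delta q (t os) o →
      RunReach A t (os ++ [o]) q'

end UCT

/-! ## Strategies and realizability -/

namespace EnvModel

variable {P σ1 σ2 S 𝕂 : Type}

/-- KLTL satisfaction over a set `R` of executions of the model. -/
def ksat (M : EnvModel P σ1 σ2 S) (R : Set (ℕ → S)) (φ : KLTL P) (ρ : ℕ → S) (i : ℕ) : Prop :=
  KLTL.sat M.lab M.simUpTo R φ ρ i

/-- `M_E ⊨ φ`. -/
def Models (M : EnvModel P σ1 σ2 S) (φ : KLTL P) : Prop :=
  ∀ ρ ∈ M.exec, M.ksat M.exec φ ρ 0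

/-- The executions of `M` compatible with a strategy (generic in the action
alphabet `α`, to cover both plain strategies and extended ones). -/
def execWithGen {α : Type} (M : EnvModel P σ1 σ2 S) (proj : α → σ1)
    (lam : List (α × M.Obs) → α) : Set (ℕ → S) :=
  {ρ | ρ ∈ M.exec ∧ ∃ a : ℕ → α × σ2,
    (∀ i, M.trans (ρ i) (proj (a i).1) (a i).2 (ρ (i + 1))) ∧
    (∀ i, (a i).1 = lam (List.ofFn (fun j : Fin i => ((a j).1, M.obs (ρ j)))))}

/-- The executions of `M` compatible with a strategy `λ : (Σ1·O)* → Σ1`. -/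
def execWith (M : EnvModel P σ1 σ2 S) (lam : List (σ1 × M.Obs) → σ1) : Set (ℕ → S) :=
  M.execWithGen id lam

/-- The strategy `λ` realizes the KLTL formula `φ` in `M`. -/
def Realizes (M : EnvModel P σ1 σ2 S) (φ : KLTL P) (lam : List (σ1 × M.Obs) → σ1) : Prop :=
  ∀ ρ ∈ M.execWith lam, M.ksat (M.execWith lam) φ ρ 0

/-- `φ` is realizable in `M`. -/
def Realizable (M : EnvModel P σ1 σ2 S) (φ : KLTL P) : Prop :=
  ∃ lam, M.Realizes φ lam

/-- The strategy `λ` realizes the LTL formula `ψ` in `M` (LTL semantics on traces). -/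
def RealizesLTL (M : EnvModel P σ1 σ2 S) (ψ : KLTL P) (lam : List (σ1 × M.Obs) → σ1) : Prop :=
  ∀ ρ ∈ M.execWith lam, KLTL.satW ψ (fun i => M.lab (ρ i)) 0

/-- The strategy associated with a complete `α`-labelled `O`-tree. -/
def stratOf {α : Type} (M : EnvModel P σ1 σ2 S) (t : List M.Obs → α) :
    List (α × M.Obs) → α :=
  fun h => t (h.map Prod.snd)

/-! ## The LTL-to-UCT construction (Section 4) -/

/-- `post_a(I,o)`. -/
def post (M : EnvModel P σ1 σ2 S) (a : σ1) (I : Set S) (o : Set S) : Set S :=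
  {s | s ∈ o ∧ ∃ a2, ∃ s' ∈ I, M.trans s' a a2 s}

/-- `I_{q,q'}` for a word automaton `A` over `2^P`. -/
def Iqq {QA : Type} (M : EnvModel P σ1 σ2 S) (A : UCW (Set P) QA) (I : Set S)
    (q q' : QA) : Set S :=
  {s ∈ I | q' ∈ A.delta q (M.lab s)}

/-- The UCT associated with an environment model and a UCW for an LTL formula;
`none` plays the role of the extra (absorbing) state `(q_w, ∅)`. -/
def ltlToUCT {QA : Type} (M : EnvModel P σ1 σ2 S) (A : UCW (Set P) QA) :
    UCT σ1 (Option (QA × Set S)) M.Obs where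
  init := {x | ∃ q0 ∈ A.init, x = some (q0, M.S0)}
  final := {x | ∃ q I, q ∈ A.final ∧ x = some (q, I)}
  delta := fun x a o =>
    match x with
    | none => {none}
    | some (q, I) =>
      if M.post a I o.val = ∅ then {none}
      else {x' | ∃ q', (∃ s ∈ I, q' ∈ A.delta q (M.lab s)) ∧
            x' = some (q', M.post a (M.Iqq A I q q') o.val)}

/-! ## Extended actions, executions and strategies (Section 5) -/

/-- Extended labelling `τ_e'(s,K) = τ_e(s) ∪ K` over `P' = P ⊕ 𝕂`. -/
def elabE (M : EnvModel P σ1 σ2 S) (s : S) (K : Set 𝕂) : Set (P ⊕ 𝕂) :=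
  (Sum.inl '' M.lab s) ∪ (Sum.inr '' K)

/-- Extended labelling as a function on pairs. -/
def elabP (M : EnvModel P σ1 σ2 S) (x : S × Set 𝕂) : Set (P ⊕ 𝕂) :=
  M.elabE x.1 x.2

/-- Indistinguishability of e-executions up to position `i`: the state parts are
`∼_i`-related and the (visible) 𝕂-parts agree. -/
def esim (M : EnvModel P σ1 σ2 S) (i : ℕ) (ρ ρ' : ℕ → S × Set 𝕂) : Prop :=
  (∀ j ≤ i, M.vlab (ρ j).1 = M.vlab (ρ' j).1) ∧ (∀ j ≤ i, (ρ j).2 = (ρ' j).2)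

/-- KLTL satisfaction over a set of e-executions. -/
def esat (M : EnvModel P σ1 σ2 S) (R : Set (ℕ → S × Set 𝕂)) (φ : KLTL (P ⊕ 𝕂))
    (ρ : ℕ → S × Set 𝕂) (i : ℕ) : Prop :=
  KLTL.sat M.elabP M.esim R φ ρ i

/-- The e-executions compatible with an e-strategy `λ' : (Σ1'·O)* → Σ1'`. -/
def execWithE (M : EnvModel P σ1 σ2 S)
    (lam : List ((σ1 × Set 𝕂) × M.Obs) → σ1 × Set 𝕂) : Set (ℕ → S × Set 𝕂) :=
  {ρ | (fun i => (ρ i).1) ∈ M.exec ∧ ∃ a : ℕ → (σ1 × Set 𝕂) × σ2,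
    (∀ i, M.trans (ρ i).1 (a i).1.1 (a i).2 (ρ (i + 1)).1) ∧
    (∀ i, (ρ i).2 = (a i).1.2) ∧
    (∀ i, (a i).1 = lam (List.ofFn (fun j : Fin i => ((a j).1, M.obs (ρ j).1))))}

/-- The e-strategy `λ'` realizes the formula `ψ` over `P' = P ⊕ 𝕂` in `M`. -/
def RealizesE (M : EnvModel P σ1 σ2 S) (ψ : KLTL (P ⊕ 𝕂))
    (lam : List ((σ1 × Set 𝕂) × M.Obs) → σ1 × Set 𝕂) : Prop :=
  ∀ ρ ∈ M.execWithE lam, M.esat (M.execWithE lam) ψ ρ 0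

/-! ## Branches of strategy trees and their compatible executions -/

/-- The executions compatible with the infinite branch of the `Σ1`-labelled
`O`-tree `t` following the directions `ds` (the set `exec(M_E, τ(π))`). -/
def branchExec (M : EnvModel P σ1 σ2 S) (t : List M.Obs → σ1) (ds : ℕ → M.Obs) :
    Set (ℕ → S) :=
  {ρ | ρ ∈ M.exec ∧
    (∀ i, M.obsOf (ρ (i + 1)) = (ds i).val) ∧
    (∀ i, ∃ b, M.trans (ρ i) (t (prefixOf ds i)) b (ρ (i + 1)))}

/-- `R⟨π⟩`: the e-executions compatible with the branch of the
`Σ1'`-labelled `O`-tree `t` following the directions `ds`. -/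
def branchExecE (M : EnvModel P σ1 σ2 S) (t : List M.Obs → σ1 × Set 𝕂)
    (ds : ℕ → M.Obs) : Set (ℕ → S × Set 𝕂) :=
  {ρ | (fun i => (ρ i).1) ∈ M.exec ∧
    (∀ i, M.obsOf (ρ (i + 1)).1 = (ds i).val) ∧
    (∀ i, ∃ b, M.trans (ρ i).1 (t (prefixOf ds i)).1 b (ρ (i + 1)).1) ∧
    (∀ i, (ρ i).2 = (t (prefixOf ds i)).2)}

/-- `R⟨T,π,j⟩`: union of `R⟨π'⟩` over branches `π'` agreeing with `π` up to `j`. -/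
def branchSetE (M : EnvModel P σ1 σ2 S) (t : List M.Obs → σ1 × Set 𝕂)
    (ds : ℕ → M.Obs) (j : ℕ) : Set (ℕ → S × Set 𝕂) :=
  ⋃ ds' ∈ {ds' : ℕ → M.Obs | ∀ l < j, ds' l = ds l}, M.branchExecE t ds'

/-- `T` is fair with respect to `φ` (with `name k` the formula `γ` named by `k_γ`). -/
def Fair (M : EnvModel P σ1 σ2 S) (t : List M.Obs → σ1 × Set 𝕂)
    (name : 𝕂 → KLTL (P ⊕ 𝕂)) (φ : KLTL (P ⊕ 𝕂)) : Prop :=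
  ∀ (ds : ℕ → M.Obs) (j : ℕ) (k : 𝕂),
    k ∈ (t (prefixOf ds j)).2 →
    KLTL.Subf (KLTL.atom (Sum.inr k)) φ →
    ∀ ds' : ℕ → M.Obs, (∀ l < j, ds' l = ds l) →
    ∀ ρ ∈ M.branchExecE t ds',
      M.esat (M.branchExecE t ds') (name k) ρ j

/-! ## The extended LTL-to-UCT construction and the chain `T^d, …, T^0` -/

/-- `I_{q,q'}` for extended labels. -/
def eIqq {QW : Type} (M : EnvModel P σ1 σ2 S) (A : UCW (Set (P ⊕ 𝕂)) QW) (K : Set 𝕂)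
    (I : Set S) (q q' : QW) : Set S :=
  {s ∈ I | q' ∈ A.delta q (M.elabE s K)}

/-- Transition function of the LTL-to-UCT construction over extended actions. -/
def eDelta {QW : Type} (M : EnvModel P σ1 σ2 S) (A : UCW (Set (P ⊕ 𝕂)) QW) :
    Option (QW × Set S) → σ1 × Set 𝕂 → M.Obs → Set (Option (QW × Set S)) :=
  fun x aK o =>
    match x with
    | none => {none}
    | some (q, I) =>
      if M.post aK.1 I o.val = ∅ then {none}
      else {x' | ∃ q', (∃ s ∈ I, q' ∈ A.delta q (M.elabE s aK.2)) ∧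
            x' = some (q', M.post aK.1 (M.eIqq A aK.2 I q q') o.val)}

/-- The LTL-to-UCT construction over extended actions, with designated initial
word-automaton states `Q0`. -/
def ltlToUCTe {QW : Type} (M : EnvModel P σ1 σ2 S) (A : UCW (Set (P ⊕ 𝕂)) QW)
    (Q0 : Set QW) : UCT (σ1 × Set 𝕂) (Option (QW × Set S)) M.Obs where
  init := {x | ∃ q0 ∈ Q0, x = some (q0, M.S0)}
  final := {x | ∃ q I, q ∈ A.final ∧ x = some (q, I)}
  delta := M.eDelta A

end EnvModel

/-- One step of rewriting: `InnerRepl name φ φ'` holds iff `φ'` is obtained from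
`φ` by replacing each innermost subformula `K γ` by the fresh atomic
proposition `k_γ` (an atom `Sum.inr k` with `name k = γ`). -/
inductive InnerRepl {P 𝕂 : Type} (name : 𝕂 → KLTL (P ⊕ 𝕂)) :
    KLTL (P ⊕ 𝕂) → KLTL (P ⊕ 𝕂) → Prop
  | atom (p) : InnerRepl name (.atom p) (.atom p)
  | not {φ φ'} : InnerRepl name φ φ' → InnerRepl name (.not φ) (.not φ')
  | and {φ1 φ2 φ1' φ2'} : InnerRepl name φ1 φ1' → InnerRepl name φ2 φ2' →
      InnerRepl name (.and φ1 φ2) (.and φ1' φ2')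
  | or {φ1 φ2 φ1' φ2'} : InnerRepl name φ1 φ1' → InnerRepl name φ2 φ2' →
      InnerRepl name (.or φ1 φ2) (.or φ1' φ2')
  | next {φ φ'} : InnerRepl name φ φ' → InnerRepl name (.next φ) (.next φ')
  | always {φ φ'} : InnerRepl name φ φ' → InnerRepl name (.always φ) (.always φ')
  | untl {φ1 φ2 φ1' φ2'} : InnerRepl name φ1 φ1' → InnerRepl name φ2 φ2' →
      InnerRepl name (.untl φ1 φ2) (.untl φ1' φ2')
  | knowInner {γ : KLTL (P ⊕ 𝕂)} {k : 𝕂} : γ.NoKnow → name k = γ →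
      InnerRepl name (.know γ) (.atom (Sum.inr k))
  | knowOuter {γ γ'} : ¬ γ.NoKnow → InnerRepl name γ γ' →
      InnerRepl name (.know γ) (.know γ')

/-- `ψ⁻¹`: replace each atomic proposition `k_γ` by the formula `K γ`. -/
def KLTL.unrepl {P 𝕂 : Type} (name : 𝕂 → KLTL (P ⊕ 𝕂)) : KLTL (P ⊕ 𝕂) → KLTL (P ⊕ 𝕂)
  | .atom (Sum.inl p) => .atom (Sum.inl p)
  | .atom (Sum.inr k) => .know (name k)
  | .not φ => .not (unrepl name φ)
  | .and φ ψ => .and (unrepl name φ) (unrepl name ψ)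
  | .or φ ψ => .or (unrepl name φ) (unrepl name ψ)
  | .next φ => .next (unrepl name φ)
  | .always φ => .always (unrepl name φ)
  | .untl φ ψ => .untl (unrepl name φ) (unrepl name ψ)
  | .know φ => .know (unrepl name φ)

/-- `ChainStep M W initγ φnext Tnext Tcur`: `Tcur` (the automaton `T^i`) is
obtained from `Tnext` (the automaton `T^{i+1}`) by adding, for every transition
source `(q,I)` with extended action `(a,K)` and observation `o` and every
`k_γ ∈ K` occurring in `φ^{i+1} = φnext`, the transitions of the automaton
`T_{γ,I}` from its initial state `(q_0^γ, I)`. -/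
def ChainStep {P σ1 σ2 S 𝕂 QW : Type} (M : EnvModel P σ1 σ2 S)
    (W : UCW (Set (P ⊕ 𝕂)) QW) (initγ : 𝕂 → QW) (φnext : KLTL (P ⊕ 𝕂))
    (Tnext Tcur : UCT (σ1 × Set 𝕂) (Option (QW × Set S)) M.Obs) : Prop :=
  Tcur.init = Tnext.init ∧ Tcur.final = Tnext.final ∧
  (∀ aK o, Tcur.delta none aK o = Tnext.delta none aK o) ∧
  ∀ (q : QW) (I : Set S) (aK : σ1 × Set 𝕂) (o : M.Obs),
    Tcur.delta (some (q, I)) aK o =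
      Tnext.delta (some (q, I)) aK o ∪
      ⋃ k ∈ {k : 𝕂 | k ∈ aK.2 ∧ KLTL.Subf (KLTL.atom (Sum.inr k)) φnext},
        M.eDelta W (some (initγ k, I)) aK o

/-- The data of the Safraless construction for a KLTL⁺ formula: the fresh
propositions `𝕂` (with `name k` the formula `γ` named by `k = k_γ`), a word
automaton `W` containing (disjointly) the UCWs for `φ^d` and for each `γ`,
with initial states `inits` (for `φ^d`) resp. `initγ k` (for `γ`), the
sequence of formulas `φ^0, …, φ^d` and the chain of tree automata `T^0, …, T^d`. -/
structure KChain {P σ1 σ2 S : Type} (M : EnvModel P σ1 σ2 S) (𝕂 QW : Type) where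
  name : 𝕂 → KLTL (P ⊕ 𝕂)
  W : UCW (Set (P ⊕ 𝕂)) QW
  inits : Set QW
  initγ : 𝕂 → QW
  d : ℕ
  φs : ℕ → KLTL (P ⊕ 𝕂)
  Ts : ℕ → UCT (σ1 × Set 𝕂) (Option (QW × Set S)) M.Obs

/-- The defining properties of the construction of the chain `T^d, …, T^0`
from a KLTL⁺ formula `φ` and an environment model. -/
structure KChain.Wf {P σ1 σ2 S 𝕂 QW : Type} {M : EnvModel P σ1 σ2 S}
    (C : KChain (σ1 := σ1) M 𝕂 QW) (φ : KLTL P) : Prop where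
  hφ0 : C.φs 0 = φ.map Sum.inl
  hstep : ∀ i < C.d, InnerRepl C.name (C.φs i) (C.φs (i + 1))
  hLTL : (C.φs C.d).NoKnow
  hleast : ∀ i < C.d, ¬ (C.φs i).NoKnow
  hWcomplete : C.W.Complete
  hWd : C.W.LucFrom C.inits = {w | KLTL.satW (C.φs C.d) w 0}
  hWγ : ∀ k : 𝕂, C.W.LucFrom {C.initγ k} = {w | KLTL.satW (C.name k) w 0}
  hTd : C.Ts C.d = M.ltlToUCTe C.W C.inits
  hTstep : ∀ i < C.d, ChainStep M C.W C.initγ (C.φs (i + 1)) (C.Ts (i + 1)) (C.Ts i)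

/-! ## Counting subset construction, determinization and the safety game -/

/-- Initial counting function `F_0` of `Det(T,B)`. -/
def countInit {Al Q D : Type} (A : UCT Al Q D) : Q → ℤ :=
  fun q => if q ∈ A.init then (if q ∈ A.final then 1 else 0) else -1

/-- Transition function of the counting subset construction (`δ` of `Det(T,B)`). -/
def countTrans {Al Q D : Type} [Fintype Q] (A : UCT Al Q D) (B : ℕ)
    (F : Q → ℤ) (σ : Al) (d : D) : Q → ℤ :=
  fun q' =>
    WithBot.unbotD (-1) (((Finset.univ : Finset Q).filter
        (fun q => q' ∈ A.delta q σ d ∧ F q ≠ -1)).image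
      (fun q => min ((B : ℤ) + 1) (F q + (if q' ∈ A.final then 1 else 0)))).max

/-- The determinization `Det(T,B)` of a UCT with the `B`-co-Büchi condition,
presented as a tree automaton. -/
def detUCT {Al Q D : Type} [Fintype Q] (A : UCT Al Q D) (B : ℕ) :
    UCT Al (Q → ℤ) D where
  init := {countInit A}
  final := {F | ∃ q, F q > (B : ℤ)}
  delta := fun F σ d => {countTrans A B F σ d}

/-- Actions played by a system strategy in the safety game `G(T,B)` against
the environment's choices of directions `ds` (plays are identified with their
sequences of action/direction choices, the game states being determined). -/
def gameActs {Al D : Type} (st : List (Al × D) → Al) (ds : ℕ → D) : ℕ → Al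
  | i => st (List.ofFn (fun j : Fin i => (gameActs st ds j.1, ds j.1)))
  termination_by i => i
  decreasing_by exact j.2

/-- The sequence of system states of `G(T,B)` in the play where the system uses
the strategy `st` and the environment chooses the directions `ds`. -/
def gameStates {Al Q D : Type} [Fintype Q] (A : UCT Al Q D) (B : ℕ)
    (st : List (Al × D) → Al) (ds : ℕ → D) : ℕ → (Q → ℤ)
  | 0 => countInit A
  | i + 1 => countTrans A B (gameStates A B st ds i) (gameActs st ds i) (ds i)

/-- The system strategy `st` is winning in the safety game `G(T,B)`: every play
consistent with it only visits safe states (never a state of `α'`). -/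
def GameWin {Al Q D : Type} [Fintype Q] (A : UCT Al Q D) (B : ℕ)
    (st : List (Al × D) → Al) : Prop :=
  ∀ (ds : ℕ → D) (i : ℕ) (q : Q), gameStates A B st ds i q ≤ (B : ℤ)

/-- States of the safety game `G(T,B)` reachable from the initial state. -/
inductive GReach {Al Q D : Type} [Fintype Q] (A : UCT Al Q D) (B : ℕ) : (Q → ℤ) → Prop
  | base : GReach A B (countInit A)
  | step {F σ d} : GReach A B F → GReach A B (countTrans A B F σ d)

/-! ## Moore machines -/

/-- A Moore machine reading directions in `D` and outputting letters in `Al`. -/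
structure Moore (Al D Mt : Type) where
  init : Mt
  step : Mt → D → Mt
  out : Mt → Al

/-- The complete `Al`-labelled `D`-tree generated by a Moore machine. -/
def Moore.tree {Al D Mt : Type} (Mm : Moore Al D Mt) : List D → Al :=
  fun ds => Mm.out (ds.foldl Mm.step Mm.init)

end

/-! A branch that visits accepting states more than `n * m` times passes twice through
the same pair (automaton state, machine state) at an accepting position; since the tree
is generated by the machine, the branch can loop between these two positions forever,
and the looped branch carries a run visiting accepting states infinitely often. -/

section Lasso

variable {X D : Type} {S : X → D → X → Prop}

def loopSucc (a b k : ℕ) : ℕ := if k + 1 = b then a else k + 1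

theorem loopSucc_iterate_of_lt {a b c j : ℕ} (h : c + j < b) :
    (loopSucc a b)^[j] c = c + j := by
  induction j with
  | zero => rfl
  | succ j ih =>
    rw [Function.iterate_succ_apply', ih (by omega), loopSucc, if_neg (by omega)]
    rfl

theorem loopSucc_iterate_loop {a b : ℕ} (hab : a < b) (k : ℕ) :
    (loopSucc a b)^[a + (b - a) * k] 0 = a := by
  have h_loop : (loopSucc a b)^[b - a] a = a := by
    obtain ⟨p, hp⟩ : ∃ p, b - a = p + 1 := ⟨b - a - 1, by omega⟩
    rw [hp, Function.iterate_succ_apply', loopSucc_iterate_of_lt (by omega), loopSucc,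
      if_pos (by omega)]
  rw [add_comm, Function.iterate_add_apply, Function.iterate_mul,
    loopSucc_iterate_of_lt (by omega), zero_add, Function.iterate_fixed h_loop]

theorem exists_path_infinitely_often {x : ℕ → X} {d : ℕ → D}
    (hx : ∀ i, S (x i) (d i) (x (i + 1))) {a b : ℕ} (hab : a < b) (heq : x a = x b) :
    ∃ (y : ℕ → X) (e : ℕ → D), y 0 = x 0 ∧ (∀ i, S (y i) (e i) (y (i + 1))) ∧
      {i | y i = x a}.Infinite := by
  set g := loopSucc a b
  have hxg : ∀ k, x (g k) = x (k + 1) := by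
    intro k
    by_cases hk : k + 1 = b
    · rw [show g k = a from if_pos hk, heq, hk]
    · rw [show g k = k + 1 from if_neg hk]
  refine ⟨fun i => x (g^[i] 0), fun i => d (g^[i] 0), rfl, fun i => ?_, ?_⟩
  · show S _ _ (x (g^[i + 1] 0))
    rw [Function.iterate_succ_apply', hxg]
    exact hx _
  · have h_inj : Function.Injective fun k => a + (b - a) * k := fun k l hkl =>
      Nat.eq_of_mul_eq_mul_left (Nat.sub_pos_of_lt hab) (Nat.add_left_cancel hkl)
    refine Set.infinite_of_injective_forall_mem h_inj fun k => ?_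
    exact congrArg x (loopSucc_iterate_loop hab k)

theorem ncard_visits_le [Finite X] {x : ℕ → X} {d : ℕ → D}
    (hx : ∀ i, S (x i) (d i) (x (i + 1))) (P : Set X)
    (hP : ∀ (y : ℕ → X) (e : ℕ → D), y 0 = x 0 → (∀ i, S (y i) (e i) (y (i + 1))) →
      {i | y i ∈ P}.Finite) :
    {i | x i ∈ P}.ncard ≤ Nat.card X := by
  by_contra! hlt
  rw [← Set.ncard_univ] at hlt
  obtain ⟨a, ha, b, hb, hne, heq⟩ :=
    Set.exists_ne_map_eq_of_ncard_lt_of_maps_to hlt (fun _ _ => Set.mem_univ _)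
  wlog hab : a < b generalizing a b
  · exact this b hb a ha hne.symm heq.symm (by omega)
  obtain ⟨y, e, hy0, hy, hinf⟩ := exists_path_infinitely_often hx hab heq
  exact hinf ((hP y e hy0 hy).subset fun i (hi : y i = x a) => show y i ∈ P from hi ▸ ha)

end Lasso

section Prefix

variable {D β : Type} (f : β → D → β) (b : β) (ds : ℕ → D)

theorem foldl_prefixOf_succ (i : ℕ) :
    (prefixOf ds (i + 1)).foldl f b = f ((prefixOf ds i).foldl f b) (ds i) := by
  rw [prefixOf, List.ofFn_succ', List.concat_eq_append, List.foldl_append]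
  rfl

theorem foldl_prefixOf_eq {m : ℕ → β} (h0 : m 0 = b) (hm : ∀ i, m (i + 1) = f (m i) (ds i))
    (i : ℕ) : (prefixOf ds i).foldl f b = m i := by
  induction i with
  | zero => exact h0.symm
  | succ i ih => rw [foldl_prefixOf_succ, ih, hm]

end Prefix

namespace UCT

variable {Al Q D Mt : Type} (A : UCT Al Q D) (Mm : Moore Al D Mt)

/-- The synchronous product of `A` with the machine `Mm`. -/
def MooreStep (x : Q × Mt) (d : D) (y : Q × Mt) : Prop :=
  y.1 ∈ A.delta x.1 (Mm.out x.2) d ∧ y.2 = Mm.step x.2 d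

theorem mooreStep_of_run {q : ℕ → Q} {ds : ℕ → D}
    (hq : ∀ i, q (i + 1) ∈ A.delta (q i) (Mm.tree (prefixOf ds i)) (ds i)) (i : ℕ) :
    A.MooreStep Mm (q i, (prefixOf ds i).foldl Mm.step Mm.init) (ds i)
      (q (i + 1), (prefixOf ds (i + 1)).foldl Mm.step Mm.init) :=
  ⟨hq i, foldl_prefixOf_succ _ _ _ i⟩

theorem run_of_mooreStep {y : ℕ → Q × Mt} {e : ℕ → D} (hy0 : (y 0).2 = Mm.init)
    (hy : ∀ i, A.MooreStep Mm (y i) (e i) (y (i + 1))) (i : ℕ) :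
    (y (i + 1)).1 ∈ A.delta (y i).1 (Mm.tree (prefixOf e i)) (e i) := by
  have h_state :=
    foldl_prefixOf_eq Mm.step Mm.init e (m := fun j => (y j).2) hy0 (fun j => (hy j).2) i
  rw [Moore.tree, h_state]
  exact (hy i).1

theorem ncard_final_le_of_mem_luc [Finite Q] [Finite Mt] (h : Mm.tree ∈ A.Luc)
    {q : ℕ → Q} {ds : ℕ → D} (hq0 : q 0 ∈ A.init)
    (hq : ∀ i, q (i + 1) ∈ A.delta (q i) (Mm.tree (prefixOf ds i)) (ds i)) :
    {i | q i ∈ A.final}.ncard ≤ Nat.card Q * Nat.card Mt := by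
  rw [← Nat.card_prod]
  refine ncard_visits_le (S := A.MooreStep Mm) (mooreStep_of_run A Mm hq) {x | x.1 ∈ A.final}
    fun y e hy0 hy => ?_
  have hy0' : y 0 = (q 0, Mm.init) := hy0
  exact h (fun i => (y i).1) e (by rw [hy0']; exact hq0)
    (run_of_mooreStep A Mm (by rw [hy0']) hy)

end UCT

theorem moore_tree_accepted_iff_bounded
    {Al Q D Mt : Type} [Fintype Q] [Fintype Mt]
    (A : UCT Al Q D) (Mm : Moore Al D Mt) :
    Mm.tree ∈ A.Luc ↔
      Mm.tree ∈ A.LucB (2 * Fintype.card Q * Fintype.card Mt) := by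
  refine ⟨fun h q ds hq0 hq => ⟨h q ds hq0 hq, ?_⟩, fun h q ds hq0 hq => (h q ds hq0 hq).1⟩
  calc {i | q i ∈ A.final}.ncard ≤ Nat.card Q * Nat.card Mt :=
        A.ncard_final_le_of_mem_luc Mm h hq0 hq
    _ = Fintype.card Q * Fintype.card Mt := by simp only [Nat.card_eq_fintype_card]
    _ ≤ 2 * Fintype.card Q * Fintype.card Mt := by
        rw [mul_assoc]
        exact Nat.le_mul_of_pos_left _ two_pos
end

section
/- For every i ∈ {0,…,d}, every tree T ∈ L_uc(T^i), every branch π of T and every e-execution ρ ∈ R⟨π⟩: R⟨π⟩, ρ, 0 ⊨ φ^i. -/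
/-! Downward induction on `i`. For `i = d`, `φ^d` is LTL and any run of its word automaton along
the trace of `ρ` lifts, together with the information sets, to a run of `T^d`, whose transitions
all survive in `T^i`; so acceptance of the tree gives acceptance of the trace. From `φ^{i+1}` to
`φ^i` one has to show that a fresh atom `k_γ` holding at position `j` of `ρ` certifies `K γ`. If
some `ρ'` of `R⟨π⟩` violated `γ` from `j` on, a run of the `γ`-automaton with infinitely many
final states, entered at `j` through the transitions that `T^i` adds to `T^{i+1}`, would extend
a run of `T^i` along `π` to a rejecting one. When the automaton for `φ^d` has no initial states,
`φ^d` is valid, and so is every `φ^i`: undo the replacements with all fresh atoms false, then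
use positivity. -/

open Classical

namespace KLTL

variable {P 𝕂 : Type}

theorem satW_shift (ψ : KLTL P) (w : ℕ → Set P) (j : ℕ) :
    ∀ i, satW ψ w (i + j) ↔ satW ψ (fun n => w (n + j)) i := by
  induction ψ with
  | atom p => intro i; rfl
  | not ψ ih => intro i; exact not_congr (ih i)
  | and ψ₁ ψ₂ ih₁ ih₂ => intro i; exact and_congr (ih₁ i) (ih₂ i)
  | or ψ₁ ψ₂ ih₁ ih₂ => intro i; exact or_congr (ih₁ i) (ih₂ i)
  | next ψ ih => intro i; rw [satW, sat, Nat.add_right_comm]; exact ih (i + 1)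
  | always ψ ih =>
      intro i
      simp only [satW, sat] at *
      constructor
      · exact fun h m hm => (ih m).mp (h (m + j) (by omega))
      · intro h m hm
        obtain ⟨m, rfl⟩ := Nat.exists_eq_add_of_le' (show j ≤ m by omega)
        exact (ih m).mpr (h m (by omega))
  | untl ψ₁ ψ₂ ih₁ ih₂ =>
      intro i
      simp only [satW, sat] at *
      constructor
      · rintro ⟨m, hm, h₂, h₁⟩
        obtain ⟨m, rfl⟩ := Nat.exists_eq_add_of_le' (show j ≤ m by omega)
        exact ⟨m, by omega, (ih₂ m).mp h₂,
          fun l hl₁ hl₂ => (ih₁ l).mp (h₁ (l + j) (by omega) (by omega))⟩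
      · rintro ⟨m, hm, h₂, h₁⟩
        refine ⟨m + j, by omega, (ih₂ m).mpr h₂, fun l hl₁ hl₂ => ?_⟩
        obtain ⟨l, rfl⟩ := Nat.exists_eq_add_of_le' (show j ≤ l by omega)
        exact (ih₁ l).mpr (h₁ l (by omega) (by omega))
  | know ψ ih => intro i; simpa [satW, sat] using ih i

theorem NoKnow.sat_iff_satW {A : Type} {ψ : KLTL P} (h : ψ.NoKnow) (lab : A → Set P)
    (sim : ℕ → (ℕ → A) → (ℕ → A) → Prop) (R : Set (ℕ → A)) (ρ : ℕ → A) :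
    ∀ i, sat lab sim R ψ ρ i ↔ satW ψ (fun n => lab (ρ n)) i := by
  induction h with
  | atom p => intro i; rfl
  | not _ ih => intro i; exact not_congr (ih i)
  | and _ _ ih₁ ih₂ => intro i; exact and_congr (ih₁ i) (ih₂ i)
  | or _ _ ih₁ ih₂ => intro i; exact or_congr (ih₁ i) (ih₂ i)
  | next _ ih => intro i; exact ih (i + 1)
  | always _ ih => intro i; exact forall_congr' fun m => imp_congr Iff.rfl (ih m)
  | untl _ _ ih₁ ih₂ =>
      intro i
      exact exists_congr fun m => and_congr Iff.rfl (and_congr (ih₂ m)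
        (forall_congr' fun l => imp_congr Iff.rfl (imp_congr Iff.rfl (ih₁ l))))

/-- KLTL⁺ over `P ⊕ 𝕂` in which only atoms of `P` are negated, so that the fresh atoms `k_γ`
occur only positively. -/
inductive IsPositiveInl : KLTL (P ⊕ 𝕂) → Prop
  | atom (p) : IsPositiveInl (.atom p)
  | natom (p : P) : IsPositiveInl (.not (.atom (Sum.inl p)))
  | and {φ ψ} : IsPositiveInl φ → IsPositiveInl ψ → IsPositiveInl (.and φ ψ)
  | or {φ ψ} : IsPositiveInl φ → IsPositiveInl ψ → IsPositiveInl (.or φ ψ)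
  | next {φ} : IsPositiveInl φ → IsPositiveInl (.next φ)
  | always {φ} : IsPositiveInl φ → IsPositiveInl (.always φ)
  | untl {φ ψ} : IsPositiveInl φ → IsPositiveInl ψ → IsPositiveInl (.untl φ ψ)
  | know {φ} : IsPositiveInl φ → IsPositiveInl (.know φ)

theorem IsPositive.isPositiveInl_map {φ : KLTL P} (h : φ.IsPositive) :
    IsPositiveInl (𝕂 := 𝕂) (φ.map Sum.inl) := by
  induction h with
  | atom p => exact .atom _
  | natom p => exact .natom p
  | and _ _ ih₁ ih₂ => exact .and ih₁ ih₂
  | or _ _ ih₁ ih₂ => exact .or ih₁ ih₂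
  | next _ ih => exact .next ih
  | always _ ih => exact .always ih
  | untl _ _ ih₁ ih₂ => exact .untl ih₁ ih₂
  | know _ ih => exact .know ih

theorem not_subf_atom_inr_map (k : 𝕂) (φ : KLTL P) :
    ¬ Subf (.atom (Sum.inr k)) (φ.map Sum.inl) := by
  induction φ <;> intro h <;> simp only [map] at h <;> cases h <;> simp_all

theorem IsPositiveInl.sat_mono {A : Type} {ψ : KLTL (P ⊕ 𝕂)} (hψ : IsPositiveInl ψ)
    {lab₀ lab₁ : A → Set (P ⊕ 𝕂)} (hsub : ∀ x, lab₀ x ⊆ lab₁ x)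
    (hinl : ∀ x (p : P), Sum.inl p ∈ lab₁ x → Sum.inl p ∈ lab₀ x)
    (sim : ℕ → (ℕ → A) → (ℕ → A) → Prop) (R : Set (ℕ → A)) :
    ∀ ρ i, sat lab₀ sim R ψ ρ i → sat lab₁ sim R ψ ρ i := by
  induction hψ with
  | atom p => exact fun ρ i h => hsub _ h
  | natom p => exact fun ρ i h h₁ => h (hinl _ _ h₁)
  | and _ _ ih₁ ih₂ => exact fun ρ i h => ⟨ih₁ ρ i h.1, ih₂ ρ i h.2⟩
  | or _ _ ih₁ ih₂ => exact fun ρ i h => h.imp (ih₁ ρ i) (ih₂ ρ i)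
  | next _ ih => exact fun ρ i h => ih ρ (i + 1) h
  | always _ ih => exact fun ρ i h m hm => ih ρ m (h m hm)
  | untl _ _ ih₁ ih₂ =>
      rintro ρ i ⟨m, hm, h₂, h₁⟩
      exact ⟨m, hm, ih₂ ρ m h₂, fun l hl₁ hl₂ => ih₁ ρ l (h₁ l hl₁ hl₂)⟩
  | know _ ih => exact fun ρ i h ρ' hρ' hsim => ih ρ' i (h ρ' hρ' hsim)

end KLTL

namespace InnerRepl

open KLTL

variable {P 𝕂 : Type} {name : 𝕂 → KLTL (P ⊕ 𝕂)} {ψ ψ' : KLTL (P ⊕ 𝕂)}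

theorem isPositiveInl (h : InnerRepl name ψ ψ') (hψ : IsPositiveInl ψ) : IsPositiveInl ψ' := by
  induction h with
  | atom p => exact .atom _
  | not h _ => cases hψ with | natom p => cases h; exact .natom p
  | and _ _ ih₁ ih₂ => cases hψ with | and g₁ g₂ => exact .and (ih₁ g₁) (ih₂ g₂)
  | or _ _ ih₁ ih₂ => cases hψ with | or g₁ g₂ => exact .or (ih₁ g₁) (ih₂ g₂)
  | next _ ih => cases hψ with | next g => exact .next (ih g)
  | always _ ih => cases hψ with | always g => exact .always (ih g)
  | untl _ _ ih₁ ih₂ => cases hψ with | untl g₁ g₂ => exact .untl (ih₁ g₁) (ih₂ g₂)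
  | knowInner _ _ => exact .atom _
  | knowOuter _ _ ih => cases hψ with | know g => exact .know (ih g)

theorem subf_atom_inr (h : InnerRepl name ψ ψ') {k : 𝕂} (hk : Subf (.atom (Sum.inr k)) ψ') :
    Subf (.atom (Sum.inr k)) ψ ∨ (name k).NoKnow := by
  induction h with
  | atom p => exact .inl hk
  | not _ ih => cases hk with | not hk => exact (ih hk).imp_left .not
  | and _ _ ih₁ ih₂ =>
      cases hk with
      | andL hk => exact (ih₁ hk).imp_left .andL
      | andR hk => exact (ih₂ hk).imp_left .andR
  | or _ _ ih₁ ih₂ =>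
      cases hk with
      | orL hk => exact (ih₁ hk).imp_left .orL
      | orR hk => exact (ih₂ hk).imp_left .orR
  | next _ ih => cases hk with | next hk => exact (ih hk).imp_left .next
  | always _ ih => cases hk with | always hk => exact (ih hk).imp_left .always
  | untl _ _ ih₁ ih₂ =>
      cases hk with
      | untlL hk => exact (ih₁ hk).imp_left .untlL
      | untlR hk => exact (ih₂ hk).imp_left .untlR
  | knowInner hγ hname => cases hk; exact .inr (hname ▸ hγ)
  | knowOuter _ _ ih => cases hk with | know hk => exact (ih hk).imp_left .know

theorem sat_of_sat {A : Type} (h : InnerRepl name ψ ψ') (hψ : IsPositiveInl ψ)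
    {lab : A → Set (P ⊕ 𝕂)} {sim : ℕ → (ℕ → A) → (ℕ → A) → Prop} {R : Set (ℕ → A)}
    (hK : ∀ k, Subf (.atom (Sum.inr k)) ψ' → ∀ ρ ∈ R, ∀ j,
      Sum.inr k ∈ lab (ρ j) → sat lab sim R (.know (name k)) ρ j) :
    ∀ ρ ∈ R, ∀ i, sat lab sim R ψ' ρ i → sat lab sim R ψ ρ i := by
  induction h with
  | atom p => exact fun _ _ _ hs => hs
  | not h _ => cases hψ with | natom p => cases h; exact fun _ _ _ hs => hs
  | and _ _ ih₁ ih₂ =>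
      cases hψ with
      | and g₁ g₂ =>
          exact fun ρ hρ i hs => ⟨ih₁ g₁ (fun k hk => hK k hk.andL) ρ hρ i hs.1,
            ih₂ g₂ (fun k hk => hK k hk.andR) ρ hρ i hs.2⟩
  | or _ _ ih₁ ih₂ =>
      cases hψ with
      | or g₁ g₂ =>
          exact fun ρ hρ i hs => hs.imp (ih₁ g₁ (fun k hk => hK k hk.orL) ρ hρ i)
            (ih₂ g₂ (fun k hk => hK k hk.orR) ρ hρ i)
  | next _ ih =>
      cases hψ with
      | next g => exact fun ρ hρ i hs => ih g (fun k hk => hK k hk.next) ρ hρ (i + 1) hs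
  | always _ ih =>
      cases hψ with
      | always g =>
          exact fun ρ hρ i hs m hm => ih g (fun k hk => hK k hk.always) ρ hρ m (hs m hm)
  | untl _ _ ih₁ ih₂ =>
      cases hψ with
      | untl g₁ g₂ =>
          rintro ρ hρ i ⟨m, hm, h₂, h₁⟩
          exact ⟨m, hm, ih₂ g₂ (fun k hk => hK k hk.untlR) ρ hρ m h₂, fun l hl₁ hl₂ =>
            ih₁ g₁ (fun k hk => hK k hk.untlL) ρ hρ l (h₁ l hl₁ hl₂)⟩
  | @knowInner γ k _ hname => exact fun ρ hρ i hs => hname ▸ hK k (.refl _) ρ hρ i hs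
  | knowOuter _ _ ih =>
      cases hψ with
      | know g =>
          exact fun ρ hρ i hs ρ' hρ' hsim =>
            ih g (fun k hk => hK k hk.know) ρ' hρ' i (hs ρ' hρ' hsim)

end InnerRepl

theorem UCW.Complete.exists_run {Al Q : Type} {A : UCW Al Q} (hA : A.Complete) (q₀ : Q)
    (w : ℕ → Al) : ∃ r : ℕ → Q, r 0 = q₀ ∧ ∀ n, r (n + 1) ∈ A.delta (r n) (w n) :=
  ⟨fun n => Nat.rec q₀ (fun n q => (hA q (w n)).some) n, rfl, fun n => (hA _ (w n)).some_mem⟩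

namespace UCT

variable {Al Q D : Type} {A B : UCT Al Q D}

theorem Luc_subset_Luc (hinit : B.init ⊆ A.init) (hfinal : B.final ⊆ A.final)
    (hdelta : ∀ q σ d, B.delta q σ d ⊆ A.delta q σ d) : A.Luc ⊆ B.Luc :=
  fun _ ht q ds h₀ hq => (ht q ds (hinit h₀) fun i => hdelta _ _ _ (hq i)).subset
    fun _ hi => hfinal hi

/-- `p` up to position `j` followed by `r` is a run of `A` along the branch `ds`. -/
theorem finite_final_of_mem_Luc {t : List D → Al} (ht : t ∈ A.Luc) {ds : ℕ → D}
    {p r : ℕ → Q} {j : ℕ} (hp₀ : p 0 ∈ A.init)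
    (hp : ∀ n < j, p (n + 1) ∈ A.delta (p n) (t (prefixOf ds n)) (ds n)) (hr₀ : r 0 = p j)
    (hr : ∀ n, r (n + 1) ∈ A.delta (r n) (t (prefixOf ds (n + j))) (ds (n + j))) :
    {n | r n ∈ A.final}.Finite := by
  let q : ℕ → Q := fun m => if m ≤ j then p m else r (m - j)
  have hq : ∀ m, j ≤ m → q m = r (m - j) := by
    intro m hm
    rcases hm.eq_or_lt with rfl | hm
    · simp [q, hr₀]
    · simp [q, hm.not_ge]
  have hrun : ∀ m, q (m + 1) ∈ A.delta (q m) (t (prefixOf ds m)) (ds m) := by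
    intro m
    rcases lt_or_ge m j with hm | hm
    · simpa [q, hm.le, Nat.succ_le_of_lt hm] using hp m hm
    · rw [hq m hm, hq (m + 1) (by omega), Nat.sub_add_comm hm]
      simpa [Nat.sub_add_cancel hm] using hr (m - j)
  have hfin := ht q ds (by simpa [q] using hp₀) hrun
  refine (hfin.preimage (f := (· + j)) (add_left_injective j).injOn).subset fun n hn => ?_
  simpa [hq (n + j) (by omega)] using hn

end UCT

namespace EnvModel

variable {P σ1 σ2 S 𝕂 QW : Type} (M : EnvModel P σ1 σ2 S) (W : UCW (Set (P ⊕ 𝕂)) QW)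

theorem mem_eDelta_some {q q' : QW} {I : Set S} {aK : σ1 × Set 𝕂} {o : M.Obs} {s s' : S}
    (hs : s ∈ I) (hq' : q' ∈ W.delta q (M.elabE s aK.2)) (hs' : s' ∈ o.val)
    (htr : ∃ b, M.trans s aK.1 b s') :
    some (q', M.post aK.1 (M.eIqq W aK.2 I q q') o.val) ∈ M.eDelta W (some (q, I)) aK o := by
  have hpost : M.post aK.1 I o.val ≠ ∅ :=
    Set.nonempty_iff_ne_empty.mp ⟨s', hs', htr.choose, s, hs, htr.choose_spec⟩
  simp only [eDelta, if_neg hpost]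
  exact ⟨q', ⟨s, hs, hq'⟩, rfl⟩

variable {M}

theorem mem_obsOf_of_mem_branchExecE {t : List M.Obs → σ1 × Set 𝕂} {ds : ℕ → M.Obs}
    {ρ : ℕ → S × Set 𝕂} (hρ : ρ ∈ M.branchExecE t ds) (n : ℕ) : (ρ (n + 1)).1 ∈ (ds n).val :=
  hρ.2.1 n ▸ rfl

theorem exists_eDelta_run {t : List M.Obs → σ1 × Set 𝕂} {ds : ℕ → M.Obs}
    {ρ : ℕ → S × Set 𝕂} (hρ : ρ ∈ M.branchExecE t ds) (j : ℕ) {r : ℕ → QW}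
    (hr : ∀ n, r (n + 1) ∈ W.delta (r n) (M.elabP (ρ (n + j)))) {I₀ : Set S}
    (h₀ : (ρ j).1 ∈ I₀) :
    ∃ J : ℕ → Set S, J 0 = I₀ ∧ (∀ n, (ρ (n + j)).1 ∈ J n) ∧ ∀ n,
      some (r (n + 1), J (n + 1)) ∈
        M.eDelta W (some (r n, J n)) (t (prefixOf ds (n + j))) (ds (n + j)) := by
  let aK : ℕ → σ1 × Set 𝕂 := fun n => t (prefixOf ds (n + j))
  let J : ℕ → Set S := fun n => Nat.rec I₀
    (fun n Jn => M.post (aK n).1 (M.eIqq W (aK n).2 Jn (r n) (r (n + 1))) (ds (n + j)).val) n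
  have hrK : ∀ n, r (n + 1) ∈ W.delta (r n) (M.elabE (ρ (n + j)).1 (aK n).2) := fun n => by
    simpa only [elabP, hρ.2.2.2 (n + j)] using hr n
  have hobs : ∀ n, (ρ (n + j + 1)).1 ∈ (ds (n + j)).val :=
    fun n => mem_obsOf_of_mem_branchExecE hρ (n + j)
  have hmem : ∀ n, (ρ (n + j)).1 ∈ J n := by
    intro n
    induction n with
    | zero => rwa [Nat.zero_add]
    | succ n ih =>
        obtain ⟨b, hb⟩ := hρ.2.2.1 (n + j)
        rw [Nat.add_right_comm]
        exact ⟨hobs n, b, (ρ (n + j)).1, ⟨ih, hrK n⟩, hb⟩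
  exact ⟨J, rfl, hmem, fun n => M.mem_eDelta_some W (hmem n) (hrK n) (hobs n) (hρ.2.2.1 (n + j))⟩

end EnvModel

theorem ChainStep.delta_subset {P σ1 σ2 S 𝕂 QW : Type} {M : EnvModel P σ1 σ2 S}
    {W : UCW (Set (P ⊕ 𝕂)) QW} {initγ : 𝕂 → QW} {φnext : KLTL (P ⊕ 𝕂)}
    {Tnext Tcur : UCT (σ1 × Set 𝕂) (Option (QW × Set S)) M.Obs}
    (h : ChainStep M W initγ φnext Tnext Tcur) (x : Option (QW × Set S)) (aK : σ1 × Set 𝕂)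
    (o : M.Obs) : Tnext.delta x aK o ⊆ Tcur.delta x aK o := by
  rcases x with _ | ⟨q, I⟩
  · exact (h.2.2.1 aK o).ge
  · exact (h.2.2.2 q I aK o).symm ▸ Set.subset_union_left

namespace KChain.Wf

open KLTL

variable {P σ1 σ2 S 𝕂 QW : Type} {M : EnvModel P σ1 σ2 S} {C : KChain M 𝕂 QW} {φ : KLTL P}
  {i : ℕ}

theorem init_Ts (hC : C.Wf φ) (hi : i ≤ C.d) :
    (C.Ts i).init = {x | ∃ q₀ ∈ C.inits, x = some (q₀, M.S0)} := by
  induction hi using Nat.decreasingInduction with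
  | self => rw [hC.hTd]; rfl
  | of_succ k hk ih => rw [(hC.hTstep k hk).1, ih]

theorem final_Ts (hC : C.Wf φ) (hi : i ≤ C.d) :
    (C.Ts i).final = {x | ∃ q I, q ∈ C.W.final ∧ x = some (q, I)} := by
  induction hi using Nat.decreasingInduction with
  | self => rw [hC.hTd]; rfl
  | of_succ k hk ih => rw [(hC.hTstep k hk).2.1, ih]

theorem eDelta_subset_delta_Ts (hC : C.Wf φ) (hi : i ≤ C.d) (x : Option (QW × Set S))
    (aK : σ1 × Set 𝕂) (o : M.Obs) : M.eDelta C.W x aK o ⊆ (C.Ts i).delta x aK o := by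
  induction hi using Nat.decreasingInduction with
  | self => rw [hC.hTd]; rfl
  | of_succ k hk ih => exact ih.trans ((hC.hTstep k hk).delta_subset x aK o)

theorem Luc_Ts_subset_succ (hC : C.Wf φ) (hi : i < C.d) :
    (C.Ts i).Luc ⊆ (C.Ts (i + 1)).Luc :=
  UCT.Luc_subset_Luc (hC.hTstep i hi).1.ge (hC.hTstep i hi).2.1.ge
    (hC.hTstep i hi).delta_subset

theorem isPositiveInl_φs (hC : C.Wf φ) (hφ : φ.IsPositive) (hi : i ≤ C.d) :
    IsPositiveInl (C.φs i) := by
  induction i with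
  | zero => exact hC.hφ0 ▸ hφ.isPositiveInl_map
  | succ i ih => exact (hC.hstep i hi).isPositiveInl (ih (by omega))

theorem noKnow_name (hC : C.Wf φ) (hi : i ≤ C.d) {k : 𝕂}
    (hk : Subf (.atom (Sum.inr k)) (C.φs i)) : (C.name k).NoKnow := by
  induction i with
  | zero => exact absurd (hC.hφ0 ▸ hk) (not_subf_atom_inr_map k φ)
  | succ i ih => exact ((hC.hstep i hi).subf_atom_inr hk).elim (ih (by omega)) id

variable {t : List M.Obs → σ1 × Set 𝕂} {ds : ℕ → M.Obs} {ρ : ℕ → S × Set 𝕂}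

theorem exists_run_Ts (hC : C.Wf φ) (hi : i ≤ C.d) (hρ : ρ ∈ M.branchExecE t ds)
    {r : ℕ → QW} (hr₀ : r 0 ∈ C.inits) (hr : ∀ n, r (n + 1) ∈ C.W.delta (r n) (M.elabP (ρ n))) :
    ∃ J : ℕ → Set S, some (r 0, J 0) ∈ (C.Ts i).init ∧ (∀ n, (ρ n).1 ∈ J n) ∧ ∀ n,
      some (r (n + 1), J (n + 1)) ∈
        (C.Ts i).delta (some (r n, J n)) (t (prefixOf ds n)) (ds n) := by
  obtain ⟨J, hJ₀, hJmem, hJ⟩ := M.exists_eDelta_run C.W hρ 0 hr hρ.1.1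
  refine ⟨J, ?_, hJmem, fun n => hC.eDelta_subset_delta_Ts hi _ _ _ (hJ n)⟩
  rw [hC.init_Ts hi, hJ₀]
  exact ⟨r 0, hr₀, rfl⟩

theorem trace_mem_LucFrom_inits (hC : C.Wf φ) (hi : i ≤ C.d) (ht : t ∈ (C.Ts i).Luc)
    (hρ : ρ ∈ M.branchExecE t ds) : (fun n => M.elabP (ρ n)) ∈ C.W.LucFrom C.inits := by
  intro r hr₀ hr
  obtain ⟨J, hinit, -, hJ⟩ := hC.exists_run_Ts hi hρ hr₀ hr
  refine (ht _ ds hinit hJ).subset fun n hn => ?_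
  rw [Set.mem_ofPred_eq, hC.final_Ts hi]
  exact ⟨_, _, hn, rfl⟩

theorem satW_name (hC : C.Wf φ) {q₀ : QW} (hq₀ : q₀ ∈ C.inits) (hi : i < C.d)
    (ht : t ∈ (C.Ts i).Luc) (hρ : ρ ∈ M.branchExecE t ds) {j : ℕ} {k : 𝕂}
    (hk : k ∈ (t (prefixOf ds j)).2) (hsub : Subf (.atom (Sum.inr k)) (C.φs (i + 1))) :
    satW (C.name k) (fun n => M.elabP (ρ (n + j))) 0 := by
  have hmem : (fun n => M.elabP (ρ (n + j))) ∈ C.W.LucFrom {C.initγ k} := by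
    intro r hr₀ hr
    obtain ⟨a, ha₀, ha⟩ := hC.hWcomplete.exists_run q₀ (fun n => M.elabP (ρ n))
    obtain ⟨J, hinit, hJmem, hJ⟩ := hC.exists_run_Ts hi.le hρ (ha₀ ▸ hq₀) ha
    obtain ⟨J', hJ'₀, -, hJ'⟩ := M.exists_eDelta_run C.W hρ j hr (hJmem j)
    let x : ℕ → Option (QW × Set S)
      | 0 => some (a j, J j)
      | n + 1 => some (r (n + 1), J' (n + 1))
    have hx : ∀ n, x (n + 1) ∈ (C.Ts i).delta (x n) (t (prefixOf ds (n + j))) (ds (n + j)) := by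
      rintro (_ | n)
      · rw [(hC.hTstep i hi).2.2.2, Nat.zero_add]
        refine Or.inr (Set.mem_biUnion (x := k) ⟨hk, hsub⟩ ?_)
        rw [← Set.mem_singleton_iff.mp hr₀, ← hJ'₀]
        simpa using hJ' 0
      · exact hC.eDelta_subset_delta_Ts hi.le _ _ _ (hJ' (n + 1))
    refine ((UCT.finite_final_of_mem_Luc ht hinit (fun n _ => hJ n) rfl hx).insert 0).subset ?_
    rintro (_ | n) hn
    · exact Set.mem_insert _ _
    · refine Or.inr ?_
      rw [Set.mem_ofPred_eq, hC.final_Ts hi.le]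
      exact ⟨_, _, hn, rfl⟩
  rwa [hC.hWγ k] at hmem

theorem esat_know_name (hC : C.Wf φ) {q₀ : QW} (hq₀ : q₀ ∈ C.inits) (hi : i < C.d)
    (ht : t ∈ (C.Ts i).Luc) {k : 𝕂} (hsub : Subf (.atom (Sum.inr k)) (C.φs (i + 1)))
    (hρ : ρ ∈ M.branchExecE t ds) {j : ℕ} (hkρ : Sum.inr k ∈ M.elabP (ρ j)) :
    M.esat (M.branchExecE t ds) (.know (C.name k)) ρ j := by
  have hk : k ∈ (t (prefixOf ds j)).2 := by
    rcases hkρ with ⟨p, -, hp⟩ | ⟨k', hk', hk'k⟩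
    · exact absurd hp Sum.inl_ne_inr
    · exact hρ.2.2.2 j ▸ Sum.inr_injective hk'k ▸ hk'
  intro ρ' hρ' _
  rw [(hC.noKnow_name hi hsub).sat_iff_satW]
  simpa using (satW_shift _ _ j 0).mpr (hC.satW_name hq₀ hi ht hρ' hk hsub)

theorem esat_φs_of_mem_inits (hC : C.Wf φ) (hφ : φ.IsPositive) {q₀ : QW} (hq₀ : q₀ ∈ C.inits)
    (hi : i ≤ C.d) : ∀ t ∈ (C.Ts i).Luc, ∀ ds : ℕ → M.Obs,
      ∀ ρ ∈ M.branchExecE t ds, M.esat (M.branchExecE t ds) (C.φs i) ρ 0 := by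
  induction hi using Nat.decreasingInduction with
  | self =>
      intro t ht ds ρ hρ
      have htrace := hC.trace_mem_LucFrom_inits le_rfl ht hρ
      rw [hC.hWd] at htrace
      exact (hC.hLTL.sat_iff_satW _ _ _ _ 0).mpr htrace
  | of_succ l hl ih =>
      intro t ht ds ρ hρ
      exact (hC.hstep l hl).sat_of_sat (hC.isPositiveInl_φs hφ hl.le)
        (fun _ hsub _ hρ' _ hkρ => hC.esat_know_name hq₀ hl ht hsub hρ' hkρ) ρ hρ 0
        (ih t (hC.Luc_Ts_subset_succ hl ht) ds ρ hρ)

theorem esat_φs_of_inits_eq_empty (hC : C.Wf φ) (hφ : φ.IsPositive) (h : C.inits = ∅)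
    (hi : i ≤ C.d) (R : Set (ℕ → S × Set 𝕂)) : ∀ ρ ∈ R, M.esat R (C.φs i) ρ 0 := by
  let lab₀ : S × Set 𝕂 → Set (P ⊕ 𝕂) := fun x => Sum.inl '' M.lab x.1
  have hvalid : ∀ ρ ∈ R, sat lab₀ M.esim R (C.φs i) ρ 0 := by
    induction hi using Nat.decreasingInduction with
    | self =>
        intro ρ _
        have hall : (fun n => lab₀ (ρ n)) ∈ C.W.LucFrom C.inits :=
          fun r hr₀ => absurd (h ▸ hr₀) (Set.notMem_empty _)
        rw [hC.hWd] at hall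
        exact (hC.hLTL.sat_iff_satW _ _ _ _ 0).mpr hall
    | of_succ l hl ih =>
        exact fun ρ hρ => (hC.hstep l hl).sat_of_sat (hC.isPositiveInl_φs hφ hl.le) (lab := lab₀)
          (fun _ _ _ _ _ ⟨_, _, hp⟩ => absurd hp Sum.inl_ne_inr) ρ hρ 0 (ih ρ hρ)
  refine fun ρ hρ => (hC.isPositiveInl_φs hφ hi).sat_mono (fun _ => Set.subset_union_left) ?_
    M.esim R ρ 0 (hvalid ρ hρ)
  rintro x p (hp | ⟨k, -, hp⟩)
  · exact hp
  · exact absurd hp Sum.inr_ne_inl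

end KChain.Wf

theorem Ti_branches_satisfy_general
    {P σ1 σ2 S 𝕂 QW : Type}
    (M : EnvModel P σ1 σ2 S)
    (φ : KLTL P) (hφ : φ.IsPositive)
    (C : KChain M 𝕂 QW) (hC : C.Wf φ) :
    ∀ i ≤ C.d, ∀ t ∈ (C.Ts i).Luc, ∀ ds : ℕ → M.Obs,
      ∀ ρ ∈ M.branchExecE t ds, M.esat (M.branchExecE t ds) (C.φs i) ρ 0 := by
  intro i hi t ht ds ρ hρ
  rcases C.inits.eq_empty_or_nonempty with h | ⟨q₀, hq₀⟩
  · exact hC.esat_φs_of_inits_eq_empty hφ h hi _ ρ hρ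
  · exact hC.esat_φs_of_mem_inits hφ hq₀ hi t ht ds ρ hρ

theorem Ti_branches_satisfy
    {P σ1 σ2 S 𝕂 QW : Type} [Fintype P] [Fintype σ1] [Fintype σ2] [Fintype S]
    [Fintype 𝕂]
    (M : EnvModel P σ1 σ2 S) (hdf : M.DeadlockFree) (hsc : M.SysComplete)
    (φ : KLTL P) (hφ : φ.IsPositive)
    (C : KChain M 𝕂 QW) (hC : C.Wf φ) :
    ∀ i ≤ C.d, ∀ t ∈ (C.Ts i).Luc, ∀ ds : ℕ → M.Obs,
      ∀ ρ ∈ M.branchExecE t ds, M.esat (M.branchExecE t ds) (C.φs i) ρ 0 :=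
  Ti_branches_satisfy_general M φ hφ C hC
end
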